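/- (Cohen et al. certification, as derived from the Lipschitz lemma) Let f : ℝ^d → {1,...,K} be measurable, σ > 0, P_c(x) = P_{η~N(0,σ²I)}(f(x+η)=c), and g(x) = argmax_c P_c(x). If P_y(x) > max_{y'≠y} P_{y'}(x) (all probabilities in (0,1)), then for every δ with ‖δ‖₂ < (σ/2)[Φ⁻¹(P_y(x)) − Φ⁻¹(max_{y'≠y} P_{y'}(x))], we have P_y(x+δ) ≥ P_{y'}(x+δ) for all y' ≠ y, hence g(x+δ) = y. -/

import Mathlib

/-!
For every class `c`, `x ↦ Φ⁻¹(P_c(x))` is `1/σ`-Lipschitz: if a set has Gaussian mass `Φ(a)`,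
its translate by `δ` has mass at least `Φ(a - ‖δ‖/σ)`. The Gaussian translated by `δ` has density
`exp((2⟪w, δ⟫ - ‖δ‖²)/(2σ²))` with respect to the centred one, an increasing function of
`⟪w, δ⟫`; by the Neyman–Pearson exchange argument, among sets of a given mass the half-space
`{⟪w, δ⟫ ≤ t}` has the smallest translated mass, and half-spaces are computed exactly because
`⟪·, u⟫` pushes the Gaussian forward to a one-dimensional Gaussian (compare characteristic
functions). Moving from `x` to `x + δ` therefore lowers `Φ⁻¹(P_y)` and raises each `Φ⁻¹(P_y')`
by at most `‖δ‖/σ`, which a margin of more than `2‖δ‖/σ` survives.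
-/

open MeasureTheory Real Set

noncomputable def Phi (x : ℝ) : ℝ :=
  ∫ t in Set.Iic x, (Real.sqrt (2 * Real.pi))⁻¹ * Real.exp (-t ^ 2 / 2)

noncomputable def PhiInv : ℝ → ℝ := Function.invFun Phi

noncomputable def gaussMeasure (d : ℕ) (σ : ℝ) :
    Measure (EuclideanSpace ℝ (Fin d)) :=
  volume.withDensity fun x =>
    ENNReal.ofReal ((2 * Real.pi * σ ^ 2) ^ (-(d : ℝ) / 2) *
      Real.exp (-‖x‖ ^ 2 / (2 * σ ^ 2)))
open scoped Classical

open ProbabilityTheory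
open scoped NNReal ENNReal RealInnerProductSpace

lemma Phi_eq_setIntegral (x : ℝ) : Phi x = ∫ t in Iic x, gaussianPDFReal 0 1 t := by
  simp [Phi, gaussianPDFReal]

lemma Phi_sub_Phi (a b : ℝ) : Phi b - Phi a = ∫ t in a..b, gaussianPDFReal 0 1 t := by
  rw [Phi_eq_setIntegral, Phi_eq_setIntegral]
  exact intervalIntegral.integral_Iic_sub_Iic (integrable_gaussianPDFReal 0 1).integrableOn
    (integrable_gaussianPDFReal 0 1).integrableOn

lemma Phi_eq_cdf : Phi = cdf (gaussianReal 0 1) := by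
  ext x
  rw [cdf_eq_real, measureReal_def, gaussianReal_apply_eq_integral 0 one_ne_zero,
    ENNReal.toReal_ofReal (setIntegral_nonneg measurableSet_Iic fun t _ ↦
      gaussianPDFReal_nonneg 0 1 t), Phi_eq_setIntegral]

lemma ofReal_Phi (x : ℝ) : ENNReal.ofReal (Phi x) = gaussianReal 0 1 (Iic x) := by
  rw [Phi_eq_cdf, ofReal_cdf]

lemma continuous_Phi : Continuous Phi := by
  have h : Phi = fun x ↦ Phi 0 + ∫ t in (0 : ℝ)..x, gaussianPDFReal 0 1 t := by
    ext x
    rw [← Phi_sub_Phi]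
    ring
  rw [h]
  exact continuous_const.add (intervalIntegral.continuous_primitive
    (fun _ _ ↦ (integrable_gaussianPDFReal 0 1).intervalIntegrable) 0)

lemma strictMono_Phi : StrictMono Phi := fun a b hab ↦ by
  have := intervalIntegral.intervalIntegral_pos_of_pos
    (integrable_gaussianPDFReal 0 1).intervalIntegrable
    (fun t ↦ gaussianPDFReal_pos 0 1 t one_ne_zero) hab
  linarith [Phi_sub_Phi a b]

lemma Phi_PhiInv {p : ℝ} (hp : p ∈ Ioo 0 1) : Phi (PhiInv p) = p := by
  refine Function.invFun_eq ?_
  obtain ⟨a, ha⟩ := ((Phi_eq_cdf ▸ tendsto_cdf_atBot _).eventually_lt_const hp.1).exists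
  obtain ⟨b, hb⟩ := ((Phi_eq_cdf ▸ tendsto_cdf_atTop _).eventually_const_lt hp.2).exists
  exact intermediate_value_univ a b continuous_Phi ⟨ha.le, hb.le⟩

lemma PhiInv_le_PhiInv_iff {p q : ℝ} (hp : p ∈ Ioo 0 1) (hq : q ∈ Ioo 0 1) :
    PhiInv p ≤ PhiInv q ↔ p ≤ q := by
  conv_rhs => rw [← Phi_PhiInv hp, ← Phi_PhiInv hq]
  exact strictMono_Phi.le_iff_le.symm

lemma gaussianReal_Iic {s : ℝ≥0} (hs : s ≠ 0) (t : ℝ) :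
    gaussianReal 0 (s ^ 2) (Iic t) = ENNReal.ofReal (Phi (t / s)) := by
  have hmap : (gaussianReal 0 1).map ((s : ℝ) * ·) = gaussianReal 0 (s ^ 2) := by
    convert gaussianReal_map_const_mul (μ := 0) (v := 1) (s : ℝ) using 2
    · simp
    · ext; simp
  have hpos : (0 : ℝ) < s := by positivity
  rw [ofReal_Phi, ← hmap, Measure.map_apply (measurable_const_mul _) measurableSet_Iic]
  congr 1
  ext x
  simp [le_div_iff₀ hpos, mul_comm]

lemma withDensity_apply_le_of_measure_le {α : Type*} [MeasurableSpace α] {μ : Measure α}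
    [IsFiniteMeasure μ] {L : α → ℝ≥0∞} {H T : Set α} (hH : MeasurableSet H)
    (hT : MeasurableSet T) {τ : ℝ≥0∞} (hLH : ∀ x ∈ H, L x ≤ τ) (hLT : ∀ x ∉ H, τ ≤ L x)
    (hμ : μ H ≤ μ T) : μ.withDensity L H ≤ μ.withDensity L T := by
  have hdiff : μ (H \ T) ≤ μ (T \ H) := by
    rw [← measure_inter_add_sdiff H hT, ← measure_inter_add_sdiff T hH, inter_comm T] at hμ
    exact (ENNReal.add_le_add_iff_left (measure_ne_top μ _)).1 hμ
  rw [withDensity_apply _ hH, withDensity_apply _ hT, ← lintegral_inter_add_sdiff L H hT,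
    ← lintegral_inter_add_sdiff L T hH, inter_comm T]
  refine add_le_add_right ?_ _
  calc ∫⁻ x in H \ T, L x ∂μ ≤ ∫⁻ _ in H \ T, τ ∂μ :=
        setLIntegral_mono' (hH.diff hT) fun x hx ↦ hLH x hx.1
    _ = τ * μ (H \ T) := setLIntegral_const _ τ
    _ ≤ τ * μ (T \ H) := by gcongr
    _ = ∫⁻ _ in T \ H, τ ∂μ := (setLIntegral_const _ τ).symm
    _ ≤ ∫⁻ x in T \ H, L x ∂μ := setLIntegral_mono' (hT.diff hH) fun x hx ↦ hLT x hx.2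

section gaussMeasure

variable {d : ℕ} {σ : ℝ}

lemma charFun_gaussMeasure (hσ : σ ≠ 0) (t : EuclideanSpace ℝ (Fin d)) :
    charFun (gaussMeasure d σ) t = Complex.exp (-(σ ^ 2 * ‖t‖ ^ 2 / 2)) := by
  have hb : 0 < (1 / (2 * σ ^ 2) : ℂ).re := by
    norm_cast
    positivity
  have hc : 0 < 2 * π * σ ^ 2 := by positivity
  have hintegrand (x : EuclideanSpace ℝ (Fin d)) :
      (ENNReal.ofReal ((2 * π * σ ^ 2) ^ (-(d : ℝ) / 2) * rexp (-‖x‖ ^ 2 / (2 * σ ^ 2)))).toReal •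
        Complex.exp (⟪x, t⟫ * Complex.I) = ((2 * π * σ ^ 2) ^ (-(d : ℝ) / 2) : ℝ) *
          Complex.exp (-(1 / (2 * σ ^ 2)) * ‖x‖ ^ 2 + Complex.I * ⟪t, x⟫) := by
    rw [ENNReal.toReal_ofReal (by positivity), Complex.real_smul, Complex.ofReal_mul, mul_assoc,
      Complex.ofReal_exp, ← Complex.exp_add, real_inner_comm]
    congr 2
    push_cast
    ring
  rw [charFun_apply, gaussMeasure, integral_withDensity_eq_integral_toReal_smul (by fun_prop)
    (ae_of_all _ fun _ ↦ ENNReal.ofReal_lt_top)]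
  simp_rw [hintegrand]
  rw [integral_const_mul, GaussianFourier.integral_cexp_neg_mul_sq_norm_add hb Complex.I t,
    finrank_euclideanSpace_fin, ← mul_assoc]
  have hπ : (π / (1 / (2 * σ ^ 2)) : ℂ) = ((2 * π * σ ^ 2 : ℝ) : ℂ) := by
    push_cast
    field_simp
  rw [hπ, ← Complex.ofReal_natCast, ← Complex.ofReal_ofNat, ← Complex.ofReal_div,
    ← Complex.ofReal_cpow hc.le, ← Complex.ofReal_mul, ← Real.rpow_add hc, neg_div,
    neg_add_cancel, Real.rpow_zero, Complex.ofReal_one, one_mul, Complex.I_sq]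
  congr 1
  field_simp
  push_cast
  ring

lemma isProbabilityMeasure_gaussMeasure (hσ : σ ≠ 0) :
    IsProbabilityMeasure (gaussMeasure d σ) := by
  have h := charFun_gaussMeasure (d := d) hσ 0
  rw [charFun_zero, norm_zero, measureReal_def] at h
  norm_num at h
  exact ⟨(ENNReal.toReal_eq_one_iff _).1 h⟩

lemma gaussMeasure_map_inner (hσ : σ ≠ 0) (u : EuclideanSpace ℝ (Fin d)) :
    (gaussMeasure d σ).map (⟪·, u⟫) = gaussianReal 0 (‖σ • u‖₊ ^ 2) := by
  have := isProbabilityMeasure_gaussMeasure (d := d) hσ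
  have : IsProbabilityMeasure ((gaussMeasure d σ).map (⟪·, u⟫)) :=
    Measure.isProbabilityMeasure_map (by fun_prop)
  refine Measure.ext_of_charFun (funext fun s ↦ ?_)
  have hmap : charFun ((gaussMeasure d σ).map (⟪·, u⟫)) s =
      charFun (gaussMeasure d σ) (s • u) := by
    rw [charFun_apply, charFun_apply, integral_map (by fun_prop) (by fun_prop)]
    simp [inner_smul_right, mul_comm]
  have hnorm (c : ℝ) : ‖c • u‖ ^ 2 = c ^ 2 * ‖u‖ ^ 2 := by
    rw [norm_smul, mul_pow, Real.norm_eq_abs, sq_abs]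
  rw [hmap, charFun_gaussMeasure hσ, charFun_gaussianReal]
  simp only [NNReal.coe_pow, coe_nnnorm, ← Complex.ofReal_pow, hnorm]
  congr 1
  push_cast
  ring

lemma gaussMeasure_inner_le (hσ : σ ≠ 0) {u : EuclideanSpace ℝ (Fin d)} (hu : u ≠ 0) (t : ℝ) :
    gaussMeasure d σ {w | ⟪w, u⟫ ≤ t} = ENNReal.ofReal (Phi (t / ‖σ • u‖)) := by
  have h := gaussianReal_Iic (s := ‖σ • u‖₊) (by simpa using ⟨hσ, hu⟩) t
  rw [coe_nnnorm] at h
  rw [← h, ← gaussMeasure_map_inner hσ, Measure.map_apply (by fun_prop) measurableSet_Iic]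
  rfl

lemma gaussMeasure_map_add_right (δ : EuclideanSpace ℝ (Fin d)) :
    (gaussMeasure d σ).map (· + δ) = (gaussMeasure d σ).withDensity
      fun w ↦ ENNReal.ofReal (exp ((2 * ⟪w, δ⟫ - ‖δ‖ ^ 2) / (2 * σ ^ 2))) := by
  set ρ : EuclideanSpace ℝ (Fin d) → ℝ≥0∞ := fun w ↦
    ENNReal.ofReal ((2 * π * σ ^ 2) ^ (-(d : ℝ) / 2) * exp (-‖w‖ ^ 2 / (2 * σ ^ 2)))
  have hρ (w : EuclideanSpace ℝ (Fin d)) : ρ (w - δ) =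
      ρ w * ENNReal.ofReal (exp ((2 * ⟪w, δ⟫ - ‖δ‖ ^ 2) / (2 * σ ^ 2))) := by
    simp only [ρ]
    rw [← ENNReal.ofReal_mul (by positivity), mul_assoc ((2 * π * σ ^ 2) ^ (-(d : ℝ) / 2)),
      ← exp_add, norm_sub_sq_real]
    congr 3
    ring
  rw [gaussMeasure, ← withDensity_mul _ (by fun_prop) (by fun_prop)]
  ext A hA
  rw [Measure.map_apply (measurable_add_const δ) hA,
    withDensity_apply _ (hA.preimage (measurable_add_const δ)), withDensity_apply _ hA]
  have h := (measurePreserving_add_right volume δ).setLIntegral_comp_preimage hA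
    (f := fun w ↦ ρ (w - δ)) (by fun_prop)
  simp only [add_sub_cancel_right, hρ] at h
  exact h

lemma ofReal_Phi_sub_le_gaussMeasure_preimage_add (hσ : 0 < σ)
    {S : Set (EuclideanSpace ℝ (Fin d))} (hS : MeasurableSet S) (δ : EuclideanSpace ℝ (Fin d))
    {a : ℝ} (ha : ENNReal.ofReal (Phi a) ≤ gaussMeasure d σ S) :
    ENNReal.ofReal (Phi (a - ‖δ‖ / σ)) ≤ gaussMeasure d σ ((· + δ) ⁻¹' S) := by
  rcases eq_or_ne δ 0 with rfl | hδ
  · simpa using ha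
  have := isProbabilityMeasure_gaussMeasure (d := d) hσ.ne'
  have hσδ : ‖σ • δ‖ = σ * ‖δ‖ := by rw [norm_smul, Real.norm_of_nonneg hσ.le]
  set H : Set (EuclideanSpace ℝ (Fin d)) := {w | ⟪w, δ⟫ ≤ σ * ‖δ‖ * a}
  have hH : MeasurableSet H := measurableSet_le (by fun_prop) measurable_const
  have hμH : gaussMeasure d σ H = ENNReal.ofReal (Phi a) := by
    rw [gaussMeasure_inner_le hσ.ne' hδ, hσδ]
    congr 2
    field_simp
  have hμHδ : gaussMeasure d σ ((· + δ) ⁻¹' H) = ENNReal.ofReal (Phi (a - ‖δ‖ / σ)) := by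
    have : (· + δ) ⁻¹' H = {w | ⟪w, δ⟫ ≤ σ * ‖δ‖ * a - ‖δ‖ ^ 2} := by
      ext w
      simp only [H, mem_preimage, mem_ofPred_eq, inner_add_left, real_inner_self_eq_norm_sq]
      constructor <;> intro <;> linarith
    rw [this, gaussMeasure_inner_le hσ.ne' hδ, hσδ]
    congr 2
    field_simp
  set ℓ : ℝ → ℝ≥0∞ := fun s ↦ ENNReal.ofReal (exp ((2 * s - ‖δ‖ ^ 2) / (2 * σ ^ 2)))
  have hℓ : Monotone ℓ := fun s t hst ↦ ENNReal.ofReal_le_ofReal (exp_le_exp.2 (by gcongr))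
  calc ENNReal.ofReal (Phi (a - ‖δ‖ / σ))
      = (gaussMeasure d σ).withDensity (fun w ↦ ℓ ⟪w, δ⟫) H := by
        rw [← hμHδ, ← gaussMeasure_map_add_right, Measure.map_apply (by fun_prop) hH]
    _ ≤ (gaussMeasure d σ).withDensity (fun w ↦ ℓ ⟪w, δ⟫) S :=
        withDensity_apply_le_of_measure_le hH hS (τ := ℓ (σ * ‖δ‖ * a)) (fun w hw ↦ hℓ hw)
          (fun w hw ↦ hℓ (le_of_not_ge hw)) (hμH ▸ ha)
    _ = gaussMeasure d σ ((· + δ) ⁻¹' S) := by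
        rw [← gaussMeasure_map_add_right, Measure.map_apply (by fun_prop) hS]

/-- The paper's `P_c(x)` is `smoothedProb d σ (f ⁻¹' {c}) x`. -/
noncomputable def smoothedProb (d : ℕ) (σ : ℝ) (C : Set (EuclideanSpace ℝ (Fin d)))
    (x : EuclideanSpace ℝ (Fin d)) : ℝ :=
  (gaussMeasure d σ).real ((x + ·) ⁻¹' C)

lemma PhiInv_smoothedProb_sub_le (hσ : 0 < σ) {C : Set (EuclideanSpace ℝ (Fin d))}
    (hC : MeasurableSet C) (x δ : EuclideanSpace ℝ (Fin d))
    (hx : smoothedProb d σ C x ∈ Ioo 0 1) (hxδ : smoothedProb d σ C (x + δ) ∈ Ioo 0 1) :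
    PhiInv (smoothedProb d σ C x) - ‖δ‖ / σ ≤ PhiInv (smoothedProb d σ C (x + δ)) := by
  have := isProbabilityMeasure_gaussMeasure (d := d) hσ.ne'
  have hshift : (· + δ) ⁻¹' ((x + ·) ⁻¹' C) = (x + δ + ·) ⁻¹' C := by
    ext η
    simp only [mem_preimage, show x + (η + δ) = x + δ + η by abel]
  have h := ofReal_Phi_sub_le_gaussMeasure_preimage_add hσ
    (hC.preimage (measurable_const_add x)) δ (a := PhiInv (smoothedProb d σ C x))
    (by rw [Phi_PhiInv hx, smoothedProb, ofReal_measureReal])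
  rw [hshift, ← ofReal_measureReal, ENNReal.ofReal_le_ofReal_iff measureReal_nonneg] at h
  rwa [← strictMono_Phi.le_iff_le, Phi_PhiInv hxδ]

end gaussMeasure

theorem cohen_certification_general (d K : ℕ) (σ : ℝ) (hσ : 0 < σ)
    (f : EuclideanSpace ℝ (Fin d) → Fin K) (hf : Measurable f)
    (P : Fin K → EuclideanSpace ℝ (Fin d) → ℝ)
    (hP : ∀ c x, P c x =
      ∫ η, (if f (x + η) = c then (1 : ℝ) else 0) ∂(gaussMeasure d σ))
    (x : EuclideanSpace ℝ (Fin d)) (y : Fin K)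
    (hrange : ∀ c x', P c x' ∈ Set.Ioo (0 : ℝ) 1)
    (M : ℝ) (hM : IsGreatest {v | ∃ y', y' ≠ y ∧ v = P y' x} M) :
    ∀ δ : EuclideanSpace ℝ (Fin d),
      ‖δ‖ < σ / 2 * (PhiInv (P y x) - PhiInv M) →
      ∀ y', y' ≠ y → P y' (x + δ) ≤ P y (x + δ) := by
  intro δ hδ y' hy'
  have hclass (c : Fin K) : MeasurableSet (f ⁻¹' {c}) := hf (measurableSet_singleton c)
  have hP_eq (c : Fin K) (z : EuclideanSpace ℝ (Fin d)) :
      P c z = smoothedProb d σ (f ⁻¹' {c}) z := by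
    rw [hP, smoothedProb, ← integral_indicator_one ((hclass c).preimage (measurable_const_add z))]
    congr with η
    simp [indicator_apply]
  have hlip (c : Fin K) (z w : EuclideanSpace ℝ (Fin d)) :
      PhiInv (P c z) - ‖w‖ / σ ≤ PhiInv (P c (z + w)) := by
    simp only [hP_eq] at hrange ⊢
    exact PhiInv_smoothedProb_sub_le hσ (hclass c) z w (hrange c z) (hrange c (z + w))
  obtain ⟨y₀, -, rfl⟩ := hM.1
  have hy'x : PhiInv (P y' x) ≤ PhiInv (P y₀ x) :=
    (PhiInv_le_PhiInv_iff (hrange y' x) (hrange y₀ x)).2 (hM.2 ⟨y', hy', rfl⟩)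
  have hr : ‖δ‖ / σ < (PhiInv (P y x) - PhiInv (P y₀ x)) / 2 := by
    rw [div_lt_iff₀ hσ]
    linarith
  have hy := hlip y x δ
  have hy' := hlip y' (x + δ) (-δ)
  rw [add_neg_cancel_right, norm_neg] at hy'
  exact (PhiInv_le_PhiInv_iff (hrange y' (x + δ)) (hrange y (x + δ))).1 (by linarith)

theorem cohen_certification (d K : ℕ) (hK : 2 ≤ K) (σ : ℝ) (hσ : 0 < σ)
    (f : EuclideanSpace ℝ (Fin d) → Fin K) (hf : Measurable f)
    (P : Fin K → EuclideanSpace ℝ (Fin d) → ℝ)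
    (hP : ∀ c x, P c x =
      ∫ η, (if f (x + η) = c then (1 : ℝ) else 0) ∂(gaussMeasure d σ))
    (x : EuclideanSpace ℝ (Fin d)) (y : Fin K)
    (hrange : ∀ c x', P c x' ∈ Set.Ioo (0 : ℝ) 1)
    (hcorrect : ∀ y', y' ≠ y → P y' x < P y x)
    (M : ℝ) (hM : IsGreatest {v | ∃ y', y' ≠ y ∧ v = P y' x} M) :
    ∀ δ : EuclideanSpace ℝ (Fin d),
      ‖δ‖ < σ / 2 * (PhiInv (P y x) - PhiInv M) →
      ∀ y', y' ≠ y → P y' (x + δ) ≤ P y (x + δ) :=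
  cohen_certification_general d K σ hσ f hf P hP x y hrange M hM
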